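/- Let G be a connected graph, s,t nonadjacent vertices, T_s a minimal s,t-separator with T_s ⊆ N_G(s), D a connected component of G−T_s containing neither s nor t, and T_D := T_s ∩ N_G(D). Then for every nonempty A ⊆ D, the set of minimal s,t-separators S with A ⊆ C_s(G−S) equals the union over v ∈ T_D of the sets of minimal s,t-separators S with v ∈ C_s(G−S). Equivalently, for a minimal s,t-separator S, A ⊄ C_s(G−S) if and only if T_D ⊆ S. -/

import Mathlib

variable {V : Type*}

/-- Reachability in `G` by a walk avoiding the vertex set `S`. -/
def ReachAvoid (G : SimpleGraph V) (S : Set V) (u v : V) : Prop :=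
  ∃ w : G.Walk u v, ∀ x ∈ w.support, x ∉ S

/-- The connected component of `G − S` containing `s`, as a subset of `V`. -/
def compOf (G : SimpleGraph V) (S : Set V) (s : V) : Set V :=
  {v | ReachAvoid G S s v}

/-- `S` is an `s,t`-separator of `G`. -/
def IsSep (G : SimpleGraph V) (s t : V) (S : Set V) : Prop :=
  s ∉ S ∧ t ∉ S ∧ ¬ ReachAvoid G S s t

/-- `S` is a minimal `s,t`-separator of `G`. -/
def IsMinSep (G : SimpleGraph V) (s t : V) (S : Set V) : Prop :=
  IsSep G s t S ∧ ∀ S' ⊂ S, ¬ IsSep G s t S'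

/-- The open neighborhood of a vertex set `X`. -/
def nbhd (G : SimpleGraph V) (X : Set V) : Set V :=
  {v | v ∉ X ∧ ∃ x ∈ X, G.Adj x v}

/-- The closed neighborhood of a vertex `v`. -/
def clNbhd (G : SimpleGraph V) (v : V) : Set V :=
  insert v (G.neighborSet v)

/-- `S` is a minimal `s,t`-separator close to `sA`. -/
def CloseTo (G : SimpleGraph V) (s t : V) (A : Set V) (S : Set V) : Prop :=
  IsMinSep G s t S ∧ A ⊆ compOf G S s ∧
    ∀ T, IsMinSep G s t T → T ≠ S → A ⊆ compOf G T s →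
      ¬ compOf G T s ⊆ compOf G S s

/-- `G` contains no asteroidal triple. -/
def IsATFree (G : SimpleGraph V) : Prop :=
  ¬ ∃ a b c : V, a ≠ b ∧ a ≠ c ∧ b ≠ c ∧
    ¬ G.Adj a b ∧ ¬ G.Adj a c ∧ ¬ G.Adj b c ∧
    (∃ w : G.Walk a b, ∀ x ∈ w.support, x ∉ clNbhd G c) ∧
    (∃ w : G.Walk a c, ∀ x ∈ w.support, x ∉ clNbhd G b) ∧
    (∃ w : G.Walk b c, ∀ x ∈ w.support, x ∉ clNbhd G a)

/-- `S` is an `A,B`-separator. -/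
def IsABSep (G : SimpleGraph V) (A B : Set V) (S : Set V) : Prop :=
  S ⊆ (A ∪ B)ᶜ ∧ ∀ a ∈ A, ∀ b ∈ B, ¬ ReachAvoid G S a b

/-- `S` is a minimal `A,B`-separator. -/
def IsMinABSep (G : SimpleGraph V) (A B S : Set V) : Prop :=
  IsABSep G A B S ∧ ∀ S' ⊂ S, ¬ IsABSep G A B S'

/-- `S` is a safe (connectivity-preserving) `A,B`-separator: removing `S`
leaves two distinct components, one containing `A` and one containing `B`. -/
def IsSafeSep (G : SimpleGraph V) (A B S : Set V) : Prop :=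
  S ⊆ (A ∪ B)ᶜ ∧ ∃ a b : V, a ∉ S ∧ b ∉ S ∧
    A ⊆ compOf G S a ∧ B ⊆ compOf G S b ∧
    Disjoint (compOf G S a) (compOf G S b)

/-- The induced subgraph on `X` is connected (any two vertices of `X` are joined
by a walk staying in `X`). -/
def ConnIn (G : SimpleGraph V) (X : Set V) : Prop :=
  ∀ x ∈ X, ∀ y ∈ X, ∃ w : G.Walk x y, ∀ z ∈ w.support, z ∈ X

/-- The graph obtained from `G` by contracting `{s} ∪ A` to the vertex `s`
(the vertices of `A` become isolated). -/
def contractGraph (G : SimpleGraph V) (s : V) (A : Set V) : SimpleGraph V where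
  Adj u v := u ∉ A ∧ v ∉ A ∧ u ≠ v ∧
    (G.Adj u v ∨ (u = s ∧ ∃ a ∈ A, G.Adj a v) ∨ (v = s ∧ ∃ a ∈ A, G.Adj a u))
  symm := by
    constructor
    rintro u v ⟨hu, hv, hne, h⟩
    refine ⟨hv, hu, hne.symm, ?_⟩
    rcases h with h | h | h
    · exact Or.inl h.symm
    · exact Or.inr (Or.inr h)
    · exact Or.inr (Or.inl h)
  loopless := by
    constructor
    rintro u ⟨_, _, hne, _⟩
    exact hne rfl

/-- The graph obtained from `G` by adding all edges from `s` to `N_G[A]`. -/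
def addApex (G : SimpleGraph V) (s : V) (A : Set V) : SimpleGraph V where
  Adj u v := G.Adj u v ∨
    (u = s ∧ v ≠ s ∧ v ∈ A ∪ nbhd G A) ∨
    (v = s ∧ u ≠ s ∧ u ∈ A ∪ nbhd G A)
  symm := by
    constructor
    rintro u v (h | h | h)
    · exact Or.inl h.symm
    · exact Or.inr (Or.inr h)
    · exact Or.inr (Or.inl h)
  loopless := by
    constructor
    rintro u (h | ⟨h1, h2, _⟩ | ⟨h1, h2, _⟩)
    · exact G.loopless.irrefl u h
    · exact h2 h1
    · exact h2 h1

/-- The graph obtained from `G` by subdividing every edge. -/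
def subdiv (G : SimpleGraph V) : SimpleGraph (V ⊕ G.edgeSet) where
  Adj x y :=
    match x, y with
    | Sum.inl u, Sum.inr e => u ∈ (e : Sym2 V)
    | Sum.inr e, Sum.inl u => u ∈ (e : Sym2 V)
    | _, _ => False
  symm := by
    constructor
    rintro (u | e) (v | f) h <;> exact h
  loopless := by
    constructor
    rintro (u | e) h <;> exact h

/-- The instance `2Dis(G,A,B)` of 2-Disjoint-Connected-Subgraphs has a solution. -/
def TwoDisSolvable (G : SimpleGraph V) (A B : Set V) : Prop :=
  ∃ A₁ B₁ : Set V, Disjoint A₁ B₁ ∧ A ⊆ A₁ ∧ B ⊆ B₁ ∧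
    ConnIn G A₁ ∧ ConnIn G B₁

/-!
Every vertex of a minimal `s,t`-separator `S` lies on an `s,t`-walk meeting `S` only there.
If such a vertex lay in `D`, the part of that walk from `t` to `D` would leave `t` avoiding `S`
and enter `D` through `N(D) ⊆ T_s ⊆ N(s)`, joining `t` to `s` in `G − S`. So `S` misses the
connected set `D`, and `A ⊆ C_s(G − S)` holds iff `C_s(G − S)` reaches some vertex of `N(D)`;
as these vertices are all adjacent to `s`, this happens iff one of them is outside `S`.
-/

open SimpleGraph

namespace ReachAvoid

variable {G : SimpleGraph V} {S : Set V} {u v x : V}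

lemma refl (hu : u ∉ S) : ReachAvoid G S u u :=
  ⟨Walk.nil, by simpa using hu⟩

lemma symm (h : ReachAvoid G S u v) : ReachAvoid G S v u := by
  obtain ⟨w, hw⟩ := h
  exact ⟨w.reverse, fun z hz => hw z (by simpa using hz)⟩

lemma trans (h₁ : ReachAvoid G S u v) (h₂ : ReachAvoid G S v x) : ReachAvoid G S u x := by
  obtain ⟨w₁, hw₁⟩ := h₁
  obtain ⟨w₂, hw₂⟩ := h₂
  refine ⟨w₁.append w₂, fun z hz => ?_⟩
  rw [Walk.mem_support_append_iff] at hz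
  exact hz.elim (hw₁ z) (hw₂ z)

lemma left_notMem (h : ReachAvoid G S u v) : u ∉ S :=
  h.elim fun w hw => hw u w.start_mem_support

lemma right_notMem (h : ReachAvoid G S u v) : v ∉ S :=
  h.elim fun w hw => hw v w.end_mem_support

lemma of_adj (h : G.Adj u v) (hu : u ∉ S) (hv : v ∉ S) : ReachAvoid G S u v :=
  ⟨h.toWalk, by simp [hu, hv]⟩

lemma of_mem_support {w : G.Walk u v} (hw : ∀ z ∈ w.support, z ∉ S) {z : V}
    (hz : z ∈ w.support) : ReachAvoid G S u z := by
  classical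
  exact ⟨w.takeUntil z hz, fun y hy => hw y (w.support_takeUntil_subset_support hz hy)⟩

end ReachAvoid

variable {G : SimpleGraph V}

lemma mem_compOf_iff_notMem_of_adj {S : Set V} {s v : V} (hs : s ∉ S) (h : G.Adj s v) :
    v ∈ compOf G S s ↔ v ∉ S :=
  ⟨ReachAvoid.right_notMem, ReachAvoid.of_adj h hs⟩

lemma nbhd_compOf_subset (S : Set V) (d : V) : nbhd G (compOf G S d) ⊆ S := by
  rintro v ⟨hv, x, ⟨w, hw⟩, hxv⟩
  by_contra hvS
  refine hv ⟨w.concat hxv, fun z hz => ?_⟩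
  rw [Walk.support_concat, List.mem_append, List.mem_singleton] at hz
  exact hz.elim (hw z) fun hzv => hzv ▸ hvS

lemma reachAvoid_of_mem_compOf {S T : Set V} {d x y : V} (hT : Disjoint T (compOf G S d))
    (hx : x ∈ compOf G S d) (hy : y ∈ compOf G S d) : ReachAvoid G T x y := by
  have from_root : ∀ b ∈ compOf G S d, ReachAvoid G T d b := by
    rintro b ⟨w, hw⟩
    exact ⟨w, fun z hz => hT.notMem_of_mem_right (ReachAvoid.of_mem_support hw hz)⟩
  exact (from_root x hx).symm.trans (from_root y hy)

lemma exists_mem_nbhd_reachAvoid {S D : Set V} {u y : V} (w : G.Walk u y) (hu : u ∉ D)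
    (hy : y ∈ D) (hw : ∀ z ∈ w.support, z ∉ D → z ∉ S) :
    ∃ p ∈ nbhd G D, ReachAvoid G S u p := by
  induction w with
  | nil => exact absurd hy hu
  | @cons a b c h w ih =>
    have haS : a ∉ S := hw a (Walk.start_mem_support _) hu
    by_cases hb : b ∈ D
    · exact ⟨a, ⟨hu, b, hb, h.symm⟩, .refl haS⟩
    · obtain ⟨p, hp, hr⟩ := ih hb hy fun z hz => hw z (by simp [hz])
      exact ⟨p, hp, (ReachAvoid.of_adj h haS hr.left_notMem).trans hr⟩

namespace IsMinSep

variable {s t : V} {S : Set V}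

lemma exists_walk_notMem_of_ne (hS : IsMinSep G s t S) {z : V} (hz : z ∈ S) :
    ∃ w : G.Walk t z, ∀ x ∈ w.support, x ≠ z → x ∉ S := by
  classical
  have hreach : ReachAvoid G (S \ {z}) s t := by
    by_contra h
    exact hS.2 _ (Set.sdiff_singleton_ssubset.mpr hz)
      ⟨fun hs => hS.1.1 hs.1, fun ht => hS.1.2.1 ht.1, h⟩
  obtain ⟨w, hw⟩ := hreach
  have hzw : z ∈ w.support := by
    by_contra hzw
    exact hS.1.2.2 ⟨w, fun x hx hxS => hw x hx ⟨hxS, fun hxz => hzw (hxz ▸ hx)⟩⟩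
  refine ⟨(w.dropUntil z hzw).reverse, fun x hx hxz hxS => ?_⟩
  rw [Walk.support_reverse, List.mem_reverse] at hx
  exact hw x (w.support_dropUntil_subset_support hzw hx) ⟨hxS, hxz⟩

lemma disjoint_of_nbhd_subset_neighborSet (hS : IsMinSep G s t S) {D : Set V} (htD : t ∉ D)
    (hD : nbhd G D ⊆ G.neighborSet s) : Disjoint S D := by
  refine Set.disjoint_left.mpr fun z hzS hzD => ?_
  obtain ⟨w, hw⟩ := hS.exists_walk_notMem_of_ne hzS
  obtain ⟨p, hp, hr⟩ := exists_mem_nbhd_reachAvoid (S := S) w htD hzD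
    fun x hx hxD => hw x hx fun hxz => hxD (hxz ▸ hzD)
  exact hS.1.2.2 ((ReachAvoid.of_adj (hD hp) hS.1.1 hr.right_notMem).trans hr.symm)

end IsMinSep

lemma subset_compOf_iff_exists_nbhd {S T A : Set V} {s d : V} (hsD : s ∉ compOf G T d)
    (hAne : A.Nonempty) (hAD : A ⊆ compOf G T d) (hS : Disjoint S (compOf G T d)) :
    A ⊆ compOf G S s ↔ ∃ v ∈ nbhd G (compOf G T d), v ∈ compOf G S s := by
  constructor
  · intro hA
    obtain ⟨a, ha⟩ := hAne
    obtain ⟨w, hw⟩ := hA ha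
    exact exists_mem_nbhd_reachAvoid w hsD (hAD ha) fun z hz _ => hw z hz
  · rintro ⟨v, ⟨-, x, hx, hxv⟩, hv⟩ a ha
    have hxS : x ∉ S := hS.notMem_of_mem_right hx
    exact (hv.trans (.of_adj hxv.symm hv.right_notMem hxS)).trans
      (reachAvoid_of_mem_compOf hS hx (hAD ha))

theorem stmt9_general (G : SimpleGraph V) (s t : V)
    (Ts : Set V) (hTsN : Ts ⊆ G.neighborSet s)
    (d : V)
    (hsD : s ∉ compOf G Ts d) (htD : t ∉ compOf G Ts d)
    (A : Set V) (hAne : A.Nonempty) (hAD : A ⊆ compOf G Ts d) :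
    ({S : Set V | IsMinSep G s t S ∧ A ⊆ compOf G S s} =
      ⋃ v ∈ Ts ∩ nbhd G (compOf G Ts d),
        {S : Set V | IsMinSep G s t S ∧ v ∈ compOf G S s}) ∧
    ∀ S : Set V, IsMinSep G s t S →
      (¬ A ⊆ compOf G S s ↔ Ts ∩ nbhd G (compOf G Ts d) ⊆ S) := by
  have hTD : Ts ∩ nbhd G (compOf G Ts d) = nbhd G (compOf G Ts d) :=
    Set.inter_eq_right.mpr (nbhd_compOf_subset Ts d)
  have hN : nbhd G (compOf G Ts d) ⊆ G.neighborSet s := (nbhd_compOf_subset Ts d).trans hTsN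
  have key : ∀ S, IsMinSep G s t S →
      (A ⊆ compOf G S s ↔ ∃ v ∈ nbhd G (compOf G Ts d), v ∈ compOf G S s) := fun S hS =>
    subset_compOf_iff_exists_nbhd hsD hAne hAD (hS.disjoint_of_nbhd_subset_neighborSet htD hN)
  refine ⟨?_, fun S hS => ?_⟩
  · ext S
    simp only [Set.mem_ofPred_eq, Set.mem_iUnion, exists_prop, hTD]
    exact ⟨fun ⟨hS, hA⟩ => ((key S hS).mp hA).imp fun _ ⟨hv, hvS⟩ => ⟨hv, hS, hvS⟩,
      fun ⟨v, hv, hS, hvS⟩ => ⟨hS, (key S hS).mpr ⟨v, hv, hvS⟩⟩⟩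
  · have hcomp : ∀ v ∈ nbhd G (compOf G Ts d), (v ∈ compOf G S s ↔ v ∉ S) := fun v hv =>
      mem_compOf_iff_notMem_of_adj hS.1.1 (hN hv)
    rw [hTD, key S hS, Set.subset_def]
    simp +contextual only [hcomp, not_exists, not_and, not_not]

theorem stmt9 (G : SimpleGraph V) (hconn : G.Connected) (s t : V)
    (hst : s ≠ t) (hadj : ¬ G.Adj s t)
    (Ts : Set V) (hTs : IsMinSep G s t Ts) (hTsN : Ts ⊆ G.neighborSet s)
    (d : V) (hd : d ∉ Ts)
    (hsD : s ∉ compOf G Ts d) (htD : t ∉ compOf G Ts d)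
    (A : Set V) (hAne : A.Nonempty) (hAD : A ⊆ compOf G Ts d) :
    ({S : Set V | IsMinSep G s t S ∧ A ⊆ compOf G S s} =
      ⋃ v ∈ Ts ∩ nbhd G (compOf G Ts d),
        {S : Set V | IsMinSep G s t S ∧ v ∈ compOf G S s}) ∧
    ∀ S : Set V, IsMinSep G s t S →
      (¬ A ⊆ compOf G S s ↔ Ts ∩ nbhd G (compOf G Ts d) ⊆ S) :=
  stmt9_general G s t Ts hTsN d hsD htD A hAne hAD
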